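/- arXiv:1612.06044 — 2 statements merged into one kernel-verified Lean document; each statement's English description precedes it below -/
import Mathlib

section
/- Let k be a natural number and let u : ℝ → ℂ be twice continuously differentiable with M := sup_{w ∈ ℝ} (1 + w²)^{-k} |u''(w)| < ∞. Then there is a constant C > 0, depending only on k, such that for all t ≥ 1, |∫_ℝ e^{-t w²} u(w) dw − √π · u(0) · t^{-1/2}| ≤ C · M · t^{-3/2}. -/
open MeasureTheory Real

/-! Subtract the first-order Taylor polynomial of `u` at `0`. The constant term integrates to
`√(π / t) u(0)`, the linear term is odd and integrates to zero, and the remainder is at most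
`M (1 + w²)^k w²`. For `t ≥ 1` this is at most `M (1 + t w²)^k w²`, and the substitution
`v = √t w` turns its Gaussian integral into `M t^{-3/2} ∫ (1 + v²)^k v² e^{-v²} dv`. -/

theorem integral_eq_zero_of_odd {E : Type*} [NormedAddCommGroup E] [NormedSpace ℝ E]
    {f : ℝ → E} (hf : ∀ x, f (-x) = -f x) : ∫ x, f x = 0 := by
  have h := integral_neg_eq_self f volume
  simp only [hf, integral_neg] at h
  have h2 : (2 : ℝ) • ∫ x, f x = 0 := by
    rw [two_smul]
    nth_rw 1 [← h]
    exact neg_add_cancel _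
  exact (smul_eq_zero.mp h2).resolve_left two_ne_zero

theorem integrable_pow_mul_exp_neg_mul_sq {b : ℝ} (hb : 0 < b) (n : ℕ) :
    Integrable fun x : ℝ => x ^ n * exp (-b * x ^ 2) := by
  simpa only [rpow_natCast] using
    integrable_rpow_mul_exp_neg_mul_sq hb (s := n) (by linarith [n.cast_nonneg (α := ℝ)])

theorem Polynomial.integrable_eval_mul_exp_neg_mul_sq {b : ℝ} (hb : 0 < b) (p : Polynomial ℝ) :
    Integrable fun x : ℝ => p.eval x * exp (-b * x ^ 2) := by
  simp_rw [p.eval_eq_sum_range, Finset.sum_mul, mul_assoc]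
  exact integrable_finsetSum _ fun i _ =>
    (integrable_pow_mul_exp_neg_mul_sq hb i).const_mul _

open Polynomial in
theorem integrable_one_add_sq_pow_mul_sq_mul_exp_neg_sq (k : ℕ) :
    Integrable fun v : ℝ => (1 + v ^ 2) ^ k * v ^ 2 * exp (-v ^ 2) := by
  have := ((1 + X ^ 2) ^ k * X ^ 2 : ℝ[X]).integrable_eval_mul_exp_neg_mul_sq one_pos
  simpa only [eval_mul, eval_pow, eval_add, eval_one, eval_X, neg_mul, one_mul] using this

theorem integral_one_add_sq_pow_mul_sq_mul_exp_neg_sq_pos (k : ℕ) :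
    0 < ∫ v : ℝ, (1 + v ^ 2) ^ k * v ^ 2 * exp (-v ^ 2) :=
  integral_pos_of_integrable_nonneg_nonzero (x := 1) (by fun_prop)
    (integrable_one_add_sq_pow_mul_sq_mul_exp_neg_sq k) (fun v => by positivity)
    (by positivity)

theorem norm_sub_sub_smul_deriv_le {E : Type*} [NormedAddCommGroup E] [NormedSpace ℝ E]
    {u : ℝ → E} (hu : ContDiff ℝ 2 u) {B w : ℝ}
    (hB : ∀ s ∈ Set.uIcc 0 w, ‖iteratedDeriv 2 u s‖ ≤ B) :
    ‖u w - u 0 - w • deriv u 0‖ ≤ B * w ^ 2 := by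
  have hu' : Differentiable ℝ (deriv u) := by
    simpa only [iteratedDeriv_one] using hu.differentiable_iteratedDeriv 1 (by norm_num)
  have hu'' : iteratedDeriv 2 u = deriv (deriv u) := by
    rw [iteratedDeriv_succ, iteratedDeriv_one]
  have hderiv : ∀ s ∈ Set.uIcc 0 w, ‖deriv u s - deriv u 0‖ ≤ B * |w| := by
    intro s hs
    calc ‖deriv u s - deriv u 0‖ ≤ B * ‖s - 0‖ :=
          (convex_uIcc 0 w).norm_image_sub_le_of_norm_deriv_le (fun x _ => hu' x)
            (by simpa only [hu''] using hB) Set.left_mem_uIcc hs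
      _ ≤ B * |w| := by
          gcongr
          · exact (norm_nonneg _).trans (hB 0 Set.left_mem_uIcc)
          · simpa using Set.abs_sub_left_of_mem_uIcc hs
  have hg : ∀ s, HasDerivAt (fun y : ℝ => u y - y • deriv u 0) (deriv u s - deriv u 0) s :=
    fun s => ((hu.differentiable (by norm_num) s).hasDerivAt).sub
      ((hasDerivAt_id s).smul_const (deriv u 0) |>.congr_deriv (one_smul ℝ _))
  have := (convex_uIcc 0 w).norm_image_sub_le_of_norm_hasDerivWithin_le
    (fun s _ => (hg s).hasDerivWithinAt) hderiv Set.left_mem_uIcc Set.right_mem_uIcc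
  simpa [sub_right_comm, mul_assoc, ← sq] using this

section Laplace

variable {E : Type*} [NormedAddCommGroup E] [NormedSpace ℝ E] {k : ℕ} {u : ℝ → E} {M : ℝ}

theorem norm_sub_sub_smul_deriv_le_of_norm_iteratedDeriv_le (hu : ContDiff ℝ 2 u)
    (hM : ∀ s, ‖iteratedDeriv 2 u s‖ ≤ M * (1 + s ^ 2) ^ k) (w : ℝ) :
    ‖u w - u 0 - w • deriv u 0‖ ≤ M * (1 + w ^ 2) ^ k * w ^ 2 := by
  have hM0 : 0 ≤ M := by simpa using (norm_nonneg _).trans (hM 0)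
  refine norm_sub_sub_smul_deriv_le hu fun s hs => (hM s).trans ?_
  have hsw : |s| ≤ |w| := by simpa using Set.abs_sub_left_of_mem_uIcc hs
  gcongr M * (1 + ?_) ^ k
  exact sq_le_sq.mpr hsw

theorem norm_integral_exp_neg_mul_sq_smul_sub_le [CompleteSpace E] (hu : ContDiff ℝ 2 u)
    (hM : ∀ s, ‖iteratedDeriv 2 u s‖ ≤ M * (1 + s ^ 2) ^ k) {t : ℝ} (ht : 1 ≤ t) :
    ‖(∫ w, exp (-t * w ^ 2) • u w) - √(π / t) • u 0‖ ≤
      (∫ v : ℝ, (1 + v ^ 2) ^ k * v ^ 2 * exp (-v ^ 2)) * M / (t * √t) := by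
  set R : ℝ → E := fun w => u w - u 0 - w • deriv u 0 with hR
  set g : ℝ → ℝ := fun v => (1 + v ^ 2) ^ k * v ^ 2 * exp (-v ^ 2) with hg
  have ht0 : 0 < t := one_pos.trans_le ht
  have hst : 0 < √t := sqrt_pos.mpr ht0
  have hbound : ∀ w, ‖exp (-t * w ^ 2) • R w‖ ≤ M / t * g (√t * w) := by
    intro w
    have hM0 : 0 ≤ M := by simpa using (norm_nonneg _).trans (hM 0)
    have hsq : (√t * w) ^ 2 = t * w ^ 2 := by rw [mul_pow, sq_sqrt ht0.le]
    calc ‖exp (-t * w ^ 2) • R w‖ = exp (-t * w ^ 2) * ‖R w‖ := by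
          rw [norm_smul, norm_of_nonneg (exp_pos _).le]
      _ ≤ exp (-t * w ^ 2) * (M * (1 + t * w ^ 2) ^ k * w ^ 2) := by
          gcongr
          refine (norm_sub_sub_smul_deriv_le_of_norm_iteratedDeriv_le hu hM w).trans ?_
          gcongr
          nlinarith [sq_nonneg w]
      _ = M / t * g (√t * w) := by
          simp only [hg, hsq]
          field_simp
  have hgint : Integrable fun w => M / t * g (√t * w) :=
    ((integrable_one_add_sq_pow_mul_sq_mul_exp_neg_sq k).comp_mul_left' hst.ne').const_mul _
  have hRint : Integrable fun w => exp (-t * w ^ 2) • R w :=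
    hgint.mono' (Continuous.aestronglyMeasurable <| by
      have := hu.continuous
      rw [hR]
      fun_prop) (.of_forall hbound)
  have hconst : ∫ w, exp (-t * w ^ 2) • u 0 = √(π / t) • u 0 := by
    rw [integral_smul_const, integral_gaussian]
  have hodd : ∫ w, (w * exp (-t * w ^ 2)) • deriv u 0 = 0 :=
    integral_eq_zero_of_odd fun w => by simp only [neg_mul, neg_sq, neg_smul]
  have hconst_int : Integrable fun w => exp (-t * w ^ 2) • u 0 :=
    (integrable_exp_neg_mul_sq ht0).smul_const _
  have hodd_int : Integrable fun w => (w * exp (-t * w ^ 2)) • deriv u 0 :=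
    (integrable_mul_exp_neg_mul_sq ht0).smul_const _
  have hsplit : ∀ w, exp (-t * w ^ 2) • u w = exp (-t * w ^ 2) • R w +
      (exp (-t * w ^ 2) • u 0 + (w * exp (-t * w ^ 2)) • deriv u 0) := by
    intro w
    simp only [hR, smul_sub, mul_comm w, mul_smul]
    abel
  have hremainder : (∫ w, exp (-t * w ^ 2) • u w) - √(π / t) • u 0 =
      ∫ w, exp (-t * w ^ 2) • R w := by
    simp_rw [hsplit]
    rw [integral_add hRint, integral_add hconst_int hodd_int, hconst, hodd]
    · abel
    · exact hconst_int.add hodd_int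
  calc ‖(∫ w, exp (-t * w ^ 2) • u w) - √(π / t) • u 0‖
      ≤ ∫ w, M / t * g (√t * w) :=
        hremainder ▸ norm_integral_le_of_norm_le hgint (.of_forall hbound)
    _ = (∫ v, g v) * M / (t * √t) := by
        rw [integral_const_mul, Measure.integral_comp_mul_left, abs_of_pos (inv_pos.mpr hst),
          smul_eq_mul]
        field_simp

end Laplace

theorem Real.rpow_neg_one_half {t : ℝ} (ht : 0 ≤ t) : t ^ (-(1 : ℝ) / 2) = (√t)⁻¹ := by
  rw [neg_div, rpow_neg ht, sqrt_eq_rpow]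

theorem Real.rpow_neg_three_halves {t : ℝ} (ht : 0 < t) :
    t ^ (-(3 : ℝ) / 2) = (t * √t)⁻¹ := by
  rw [show -(3 : ℝ) / 2 = -(1 + 1 / 2) by norm_num, rpow_neg ht.le, rpow_add ht, rpow_one,
    sqrt_eq_rpow]

/-- Laplace-type asymptotic lemma: if `u : ℝ → ℂ` is `C²` with
`M = sup_w (1+w²)^{-k} |u''(w)| < ∞`, then there is `C > 0` depending only on `k`
such that for all `t ≥ 1`,
`|∫ e^{-tw²} u(w) dw − √π · u(0) · t^{-1/2}| ≤ C · M · t^{-3/2}`. -/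
theorem stmt_0 (k : ℕ) :
    ∃ C : ℝ, 0 < C ∧
      ∀ (u : ℝ → ℂ) (M : ℝ),
        ContDiff ℝ 2 u →
        (∀ w : ℝ, ((1 + w ^ 2) ^ k)⁻¹ * ‖iteratedDeriv 2 u w‖ ≤ M) →
        ∀ t : ℝ, 1 ≤ t →
          ‖(∫ w : ℝ, Complex.exp (-(t : ℂ) * (w : ℂ) ^ 2) * u w) -
              ((Real.sqrt π * t ^ (-(1 : ℝ) / 2) : ℝ) : ℂ) * u 0‖ ≤
            C * M * t ^ (-(3 : ℝ) / 2) := by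
  refine ⟨_, integral_one_add_sq_pow_mul_sq_mul_exp_neg_sq_pos k, fun u M hu hM t ht => ?_⟩
  have ht0 : 0 < t := one_pos.trans_le ht
  have hM' : ∀ s, ‖iteratedDeriv 2 u s‖ ≤ M * (1 + s ^ 2) ^ k := fun s => by
    rw [mul_comm, ← inv_mul_le_iff₀ (by positivity)]
    exact hM s
  have hintegrand : ∀ w : ℝ,
      Complex.exp (-(t : ℂ) * (w : ℂ) ^ 2) * u w = exp (-t * w ^ 2) • u w := fun w => by
    rw [Complex.real_smul]
    push_cast
    rfl
  have hgauss : √π * t ^ (-(1 : ℝ) / 2) = √(π / t) := by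
    rw [rpow_neg_one_half ht0.le, sqrt_div' _ ht0.le, div_eq_mul_inv]
  simp_rw [hintegrand, hgauss, ← Complex.real_smul]
  rw [rpow_neg_three_halves ht0, ← div_eq_mul_inv]
  exact norm_integral_exp_neg_mul_sq_smul_sub_le hu hM' ht
end

section
/- Let g : ℂ → ℂ be entire, let c ∈ ℝ, and suppose there exist constants A > 0 and N ∈ ℕ such that |g(z)| ≤ A (1 + |z|)^N for all z ∈ ℂ with |Im z| ≤ |c|. Then for every t > 0 and every r ∈ ℝ, ∫_ℝ e^{-t λ² − i λ r} g(λ) dλ = ∫_ℝ e^{-t (w + i c)² − i (w + i c) r} g(w + i c) dw. In particular, taking c = −r/(2t), ∫_ℝ e^{-t λ² − i λ r} g(λ) dλ = e^{-r²/(4t)} ∫_ℝ e^{-t w²} g(w − i r/(2t)) dw. -/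
open MeasureTheory Real

/-!
The integrand `f z = exp (-t z² - i z r) * g z` is entire, and on the strip `|Im z| ≤ |c|` it is
dominated by `K (1 + |Re z|^N) exp (-t (Re z)²)`, which is integrable and tends to `0` at infinity.
Cauchy's theorem on the rectangle `[-T, T] × [0, c]` equates the integrals of `f` over `[-T, T]`
and `[-T, T] + ic` up to the two vertical sides, each of size at most `|c|` times the majorant at
`±T`; letting `T → ∞` shifts the line of integration. For `c = -r/(2t)`, completing the square
splits off the factor `exp (-r²/(4t))`.
-/

open Complex Filter Set Topology intervalIntegral

section ContourShift

variable {f : ℂ → ℂ}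

theorem intervalIntegral_add_mul_I_eq_add_vertical (hf : Differentiable ℂ f) (c T : ℝ) :
    (∫ x in -T..T, f (x + c * I)) =
      (∫ x in -T..T, f x) +
        I * ((∫ y in 0..c, f (T + y * I)) - ∫ y in 0..c, f (-T + y * I)) := by
  have h := integral_boundary_rect_eq_zero_of_differentiableOn f (-T) (T + c * I)
    hf.differentiableOn
  simp only [neg_re, neg_im, ofReal_re, ofReal_im, add_re, add_im, mul_re, mul_im, I_re, I_im,
    ofReal_neg, neg_zero, ofReal_zero, zero_mul, add_zero, mul_zero, mul_one, sub_zero,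
    zero_add, smul_eq_mul] at h
  linear_combination -h

variable {c : ℝ} {B : ℝ → ℝ}

theorem tendsto_integral_vertical_cocompact (hB : Tendsto B (cocompact ℝ) (𝓝 0))
    (hfB : ∀ x : ℝ, ∀ y ∈ uIcc 0 c, ‖f (x + y * I)‖ ≤ B x) :
    Tendsto (fun x : ℝ => ∫ y in 0..c, f (x + y * I)) (cocompact ℝ) (𝓝 0) := by
  refine squeeze_zero_norm (fun x => norm_integral_le_of_norm_le_const fun y hy =>
    hfB x y (uIoc_subset_uIcc hy)) ?_
  simpa using hB.mul_const |c - 0|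

theorem integral_eq_integral_add_mul_I (hf : Differentiable ℂ f) (hB_int : Integrable B)
    (hB_lim : Tendsto B (cocompact ℝ) (𝓝 0))
    (hfB : ∀ x : ℝ, ∀ y ∈ uIcc 0 c, ‖f (x + y * I)‖ ≤ B x) :
    ∫ x : ℝ, f x = ∫ x : ℝ, f (x + c * I) := by
  have hline : ∀ y ∈ uIcc 0 c, Integrable fun x : ℝ => f (x + y * I) := fun y hy =>
    hB_int.mono' (hf.continuous.comp (by fun_prop)).aestronglyMeasurable
      (ae_of_all _ fun x => hfB x y hy)
  have hV := tendsto_integral_vertical_cocompact hB_lim hfB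
  have hV_pos := hV.comp (atTop_le_cocompact (α := ℝ))
  have hV_neg := hV.comp ((atBot_le_cocompact (α := ℝ)).trans' tendsto_neg_atTop_atBot)
  have h_lim := (intervalIntegral_tendsto_integral (hline 0 left_mem_uIcc)
    tendsto_neg_atTop_atBot tendsto_id).add ((hV_pos.sub hV_neg).const_mul I)
  simp only [ofReal_zero, zero_mul, add_zero, sub_zero, mul_zero] at h_lim
  refine tendsto_nhds_unique (h_lim.congr fun T => ?_) (intervalIntegral_tendsto_integral
    (hline c right_mem_uIcc) tendsto_neg_atTop_atBot tendsto_id)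
  simpa using (intervalIntegral_add_mul_I_eq_add_vertical hf c T).symm

end ContourShift

theorem integrable_one_add_abs_pow_mul_exp_neg_mul_sq {t : ℝ} (ht : 0 < t) (N : ℕ) :
    Integrable fun x : ℝ => (1 + |x| ^ N) * rexp (-t * x ^ 2) := by
  have h_pow : Integrable fun x : ℝ => |x| ^ N * rexp (-t * x ^ 2) :=
    (integrable_rpow_mul_exp_neg_mul_sq ht (s := N) (by linarith [N.cast_nonneg (α := ℝ)])).abs
      |>.congr (ae_of_all _ fun x => by simp [abs_mul, rpow_natCast])
  exact ((integrable_exp_neg_mul_sq ht).add h_pow).congr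
    (ae_of_all _ fun x => by simp only [Pi.add_apply]; ring)

theorem tendsto_one_add_abs_pow_mul_exp_neg_mul_sq_cocompact {t : ℝ} (ht : 0 < t) (N : ℕ) :
    Tendsto (fun x : ℝ => (1 + |x| ^ N) * rexp (-t * x ^ 2)) (cocompact ℝ) (𝓝 0) := by
  simpa [add_mul, rpow_natCast] using (tendsto_rpow_abs_mul_exp_neg_mul_sq_cocompact ht 0).add
    (tendsto_rpow_abs_mul_exp_neg_mul_sq_cocompact ht N)

theorem norm_cexp_neg_mul_sq_sub_I_mul (t r : ℝ) (z : ℂ) :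
    ‖cexp (-t * z ^ 2 - I * z * r)‖ = rexp (-t * z.re ^ 2 + t * z.im ^ 2 + r * z.im) := by
  rw [norm_exp]
  congr 1
  simp only [sub_re, mul_re, neg_re, ofReal_re, neg_im, ofReal_im, pow_two, mul_im, I_re, I_im]
  ring

theorem norm_cexp_neg_mul_sq_sub_I_mul_le {t c : ℝ} (ht : 0 ≤ t) (r : ℝ) {z : ℂ}
    (hz : |z.im| ≤ |c|) :
    ‖cexp (-t * z ^ 2 - I * z * r)‖ ≤ rexp (t * c ^ 2 + |r| * |c|) * rexp (-t * z.re ^ 2) := by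
  rw [norm_cexp_neg_mul_sq_sub_I_mul, ← Real.exp_add, exp_le_exp]
  have h_sq : t * z.im ^ 2 ≤ t * c ^ 2 := mul_le_mul_of_nonneg_left (sq_le_sq.mpr hz) ht
  have h_lin : r * z.im ≤ |r| * |c| := by
    calc r * z.im ≤ |r| * |z.im| := by rw [← abs_mul]; exact le_abs_self _
      _ ≤ |r| * |c| := by gcongr
  linarith

theorem one_add_norm_pow_le_of_abs_im_le (N : ℕ) {z : ℂ} {c : ℝ} (hz : |z.im| ≤ |c|) :
    (1 + ‖z‖) ^ N ≤ (1 + |c|) ^ N * 2 ^ (N - 1) * (1 + |z.re| ^ N) := by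
  have h_norm : 1 + ‖z‖ ≤ (1 + |c|) * (1 + |z.re|) := by
    nlinarith [norm_le_abs_re_add_abs_im z, abs_nonneg z.re, abs_nonneg c]
  calc (1 + ‖z‖) ^ N ≤ (1 + |c|) ^ N * (1 + |z.re|) ^ N := by
        rw [← mul_pow]; gcongr
    _ ≤ (1 + |c|) ^ N * (2 ^ (N - 1) * (1 ^ N + |z.re| ^ N)) := by
        gcongr; exact add_pow_le zero_le_one (abs_nonneg _) N
    _ = (1 + |c|) ^ N * 2 ^ (N - 1) * (1 + |z.re| ^ N) := by ring

theorem exists_norm_cexp_mul_le {g : ℂ → ℂ} {c A : ℝ} {N : ℕ}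
    (hbound : ∀ z : ℂ, |z.im| ≤ |c| → ‖g z‖ ≤ A * (1 + ‖z‖) ^ N) {t : ℝ} (ht : 0 ≤ t) (r : ℝ) :
    ∃ K : ℝ, ∀ z : ℂ, |z.im| ≤ |c| →
      ‖cexp (-t * z ^ 2 - I * z * r) * g z‖ ≤ K * ((1 + |z.re| ^ N) * rexp (-t * z.re ^ 2)) := by
  have hA : 0 ≤ A := by simpa using (norm_nonneg _).trans (hbound 0 (by simp))
  refine ⟨rexp (t * c ^ 2 + |r| * |c|) * (A * ((1 + |c|) ^ N * 2 ^ (N - 1))), fun z hz => ?_⟩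
  calc ‖cexp (-t * z ^ 2 - I * z * r) * g z‖
      ≤ rexp (t * c ^ 2 + |r| * |c|) * rexp (-t * z.re ^ 2) *
          (A * ((1 + |c|) ^ N * 2 ^ (N - 1) * (1 + |z.re| ^ N))) := by
        rw [norm_mul]
        gcongr
        · exact norm_cexp_neg_mul_sq_sub_I_mul_le ht r hz
        · exact (hbound z hz).trans (by gcongr; exact one_add_norm_pow_le_of_abs_im_le N hz)
    _ = _ := by ring

theorem cexp_neg_mul_sq_sub_I_mul_sub_eq {t : ℂ} (ht : t ≠ 0) (r w : ℂ) :
    cexp (-t * (w - I * (r / (2 * t))) ^ 2 - I * (w - I * (r / (2 * t))) * r) =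
      cexp (-r ^ 2 / (4 * t)) * cexp (-t * w ^ 2) := by
  rw [← Complex.exp_add]
  congr 1
  field_simp
  ring_nf
  rw [I_sq]
  ring

theorem stmt_2_general (g : ℂ → ℂ) (hg : Differentiable ℂ g) (c : ℝ)
    (A : ℝ) (N : ℕ)
    (hbound : ∀ z : ℂ, |z.im| ≤ |c| → ‖g z‖ ≤ A * (1 + ‖z‖) ^ N) :
    ∀ t : ℝ, 0 < t → ∀ r : ℝ,
      ((∫ l : ℝ, Complex.exp (-(t : ℂ) * (l : ℂ) ^ 2 - Complex.I * (l : ℂ) * (r : ℂ)) * g l) =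
        ∫ w : ℝ, Complex.exp (-(t : ℂ) * ((w : ℂ) + (c : ℂ) * Complex.I) ^ 2
            - Complex.I * ((w : ℂ) + (c : ℂ) * Complex.I) * (r : ℂ)) *
          g ((w : ℂ) + (c : ℂ) * Complex.I)) ∧
      (c = -r / (2 * t) →
        (∫ l : ℝ, Complex.exp (-(t : ℂ) * (l : ℂ) ^ 2 - Complex.I * (l : ℂ) * (r : ℂ)) * g l) =
          Complex.exp (-(r : ℂ) ^ 2 / (4 * (t : ℂ))) *
            ∫ w : ℝ, Complex.exp (-(t : ℂ) * (w : ℂ) ^ 2) *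
              g ((w : ℂ) - Complex.I * ((r : ℂ) / (2 * (t : ℂ))))) := by
  intro t ht r
  obtain ⟨K, hK⟩ := exists_norm_cexp_mul_le hbound ht.le r
  have h_shift := integral_eq_integral_add_mul_I (c := c)
    (f := fun z => cexp (-t * z ^ 2 - I * z * r) * g z) (by fun_prop)
    ((integrable_one_add_abs_pow_mul_exp_neg_mul_sq ht N).const_mul K)
    (by simpa using (tendsto_one_add_abs_pow_mul_exp_neg_mul_sq_cocompact ht N).const_mul K)
    (fun x y hy => by simpa using hK (x + y * I) (by simpa using abs_sub_left_of_mem_uIcc hy))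
  refine ⟨h_shift, fun hc => ?_⟩
  have h_line : ∀ w : ℝ, (w : ℂ) + c * I = w - I * (r / (2 * t)) := fun w => by
    rw [hc]; push_cast; ring
  simp_rw [h_shift, h_line, cexp_neg_mul_sq_sub_I_mul_sub_eq (ofReal_ne_zero.mpr ht.ne'),
    mul_assoc, MeasureTheory.integral_const_mul]

/-- Contour-shift (steepest descent) identity for Gaussian-weighted integrals of entire
functions with polynomial growth in the horizontal strip `|Im z| ≤ |c|`:
`∫_ℝ e^{-tλ² − iλr} g(λ) dλ = ∫_ℝ e^{-t(w+ic)² − i(w+ic)r} g(w+ic) dw`,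
and in particular, taking `c = −r/(2t)`,
`∫_ℝ e^{-tλ² − iλr} g(λ) dλ = e^{-r²/(4t)} ∫_ℝ e^{-tw²} g(w − ir/(2t)) dw`. -/
theorem stmt_2 (g : ℂ → ℂ) (hg : Differentiable ℂ g) (c : ℝ)
    (A : ℝ) (hA : 0 < A) (N : ℕ)
    (hbound : ∀ z : ℂ, |z.im| ≤ |c| → ‖g z‖ ≤ A * (1 + ‖z‖) ^ N) :
    ∀ t : ℝ, 0 < t → ∀ r : ℝ,
      ((∫ l : ℝ, Complex.exp (-(t : ℂ) * (l : ℂ) ^ 2 - Complex.I * (l : ℂ) * (r : ℂ)) * g l) =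
        ∫ w : ℝ, Complex.exp (-(t : ℂ) * ((w : ℂ) + (c : ℂ) * Complex.I) ^ 2
            - Complex.I * ((w : ℂ) + (c : ℂ) * Complex.I) * (r : ℂ)) *
          g ((w : ℂ) + (c : ℂ) * Complex.I)) ∧
      (c = -r / (2 * t) →
        (∫ l : ℝ, Complex.exp (-(t : ℂ) * (l : ℂ) ^ 2 - Complex.I * (l : ℂ) * (r : ℂ)) * g l) =
          Complex.exp (-(r : ℂ) ^ 2 / (4 * (t : ℂ))) *
            ∫ w : ℝ, Complex.exp (-(t : ℂ) * (w : ℂ) ^ 2) *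
              g ((w : ℂ) - Complex.I * ((r : ℂ) / (2 * (t : ℂ))))) :=
  stmt_2_general g hg c A N hbound
end
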